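/- Let Δ = Δ1 ∪_{Σ1,Σ2} Δ2 be a consistent belief base with syntax splitting and let ω, ω' ∈ Ω_Σ. If ω ≺_Δ ω', then ω ≺_{Δ1} ω' or ω ≺_{Δ2} ω'. -/
import Mathlib


open scoped Classical

namespace SysW

/-- Propositional formulas over a signature (set of atoms) `V`. -/
inductive PForm (V : Type) : Type
  | var (v : V)
  | tru
  | fls
  | neg (φ : PForm V)
  | conj (φ ψ : PForm V)
  | disj (φ ψ : PForm V)

/-- Evaluation of a formula in a world `ω : V → Bool`. -/
def PForm.eval {V : Type} (ω : V → Bool) : PForm V → Bool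
  | var v => ω v
  | tru => true
  | fls => false
  | neg φ => !(PForm.eval ω φ)
  | conj φ ψ => PForm.eval ω φ && PForm.eval ω ψ
  | disj φ ψ => PForm.eval ω φ || PForm.eval ω ψ

/-- The atoms occurring in a formula. -/
def PForm.vars {V : Type} : PForm V → Set V
  | var v => {v}
  | tru => ∅
  | fls => ∅
  | neg φ => PForm.vars φ
  | conj φ ψ => PForm.vars φ ∪ PForm.vars ψ
  | disj φ ψ => PForm.vars φ ∪ PForm.vars ψ

/-- A conditional (B|A): "if `ante` then usually `cons`". -/
structure CondRule (V : Type) : Type where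
  cons : PForm V
  ante : PForm V

/-- The atoms occurring in a conditional. -/
def condVars {V : Type} (r : CondRule V) : Set V := r.ante.vars ∪ r.cons.vars

/-- `ω` verifies (B|A) iff `ω ⊨ A ∧ B`. -/
def verifies {V : Type} (ω : V → Bool) (r : CondRule V) : Prop :=
  r.ante.eval ω = true ∧ r.cons.eval ω = true

/-- `ω` falsifies (B|A) iff `ω ⊨ A ∧ ¬B`. -/
def falsifies {V : Type} (ω : V → Bool) (r : CondRule V) : Prop :=
  r.ante.eval ω = true ∧ r.cons.eval ω = false

/-- A conditional `r` is tolerated by a set of conditionals `S` if some world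
verifies `r` and falsifies no conditional of `S`. -/
def Tolerated {V : Type} (S : Finset (CondRule V)) (r : CondRule V) : Prop :=
  ∃ ω : V → Bool, verifies ω r ∧ ∀ r' ∈ S, ¬ falsifies ω r'

/-- `rest Δ j` is what remains of `Δ` after removing the first `j` parts
`Δ^0, …, Δ^{j-1}` of the tolerance partition. -/
noncomputable def rest {V : Type} (Δ : Finset (CondRule V)) : ℕ → Finset (CondRule V)
  | 0 => Δ
  | j + 1 => (rest Δ j).filter (fun r => ¬ Tolerated (rest Δ j) r)

/-- `part Δ j` is the part `Δ^j` of the inclusion-maximal tolerance partition of `Δ`: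
the conditionals of `rest Δ j` tolerated by `rest Δ j`. -/
noncomputable def part {V : Type} (Δ : Finset (CondRule V)) (j : ℕ) : Finset (CondRule V) :=
  (rest Δ j).filter (fun r => Tolerated (rest Δ j) r)

/-- `Δ` is consistent iff the tolerance partitioning process exhausts `Δ`. -/
def Consistent {V : Type} (Δ : Finset (CondRule V)) : Prop :=
  ∃ n, rest Δ n = ∅

/-- The tolerance partition of `Δ` is `OP(Δ) = (Δ^0, …, Δ^k)`, i.e. the process
stops exactly after the part with index `k` (all parts `Δ^0, …, Δ^k` nonempty). -/
def IsOPLength {V : Type} (Δ : Finset (CondRule V)) (k : ℕ) : Prop :=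
  rest Δ (k + 1) = ∅ ∧ rest Δ k ≠ ∅

/-- `fpart Δ j ω` = `f_Δ^j(ω)`, the set of conditionals of `Δ^j` falsified by `ω`. -/
noncomputable def fpart {V : Type} (Δ : Finset (CondRule V)) (j : ℕ) (ω : V → Bool) :
    Finset (CondRule V) :=
  (part Δ j).filter (fun r => falsifies ω r)

/-- The preferred structure on worlds `ω ≺_Δ ω'`: there is `m` such that
`f_Δ^i(ω) = f_Δ^i(ω')` for all `i > m` and `f_Δ^m(ω) ⊊ f_Δ^m(ω')`.
(For `i` beyond the last index `k` of the tolerance partition of a consistent `Δ`,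
both sides are empty, so this agrees with the textbook definition.) -/
noncomputable def prefRel {V : Type} (Δ : Finset (CondRule V)) (ω ω' : V → Bool) : Prop :=
  ∃ m : ℕ, (∀ i, m < i → fpart Δ i ω = fpart Δ i ω') ∧ fpart Δ m ω ⊂ fpart Δ m ω'

/-- System W inference `A |~_Δ^w B`: for every world `ω' ⊨ A ∧ ¬B` there is a
world `ω ⊨ A ∧ B` with `ω ≺_Δ ω'`. -/
noncomputable def SysWInf {V : Type} (Δ : Finset (CondRule V)) (A B : PForm V) : Prop :=
  ∀ ω' : V → Bool, A.eval ω' = true ∧ B.eval ω' = false →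
    ∃ ω : V → Bool, (A.eval ω = true ∧ B.eval ω = true) ∧ prefRel Δ ω ω'

/-- `Δ = Δ1 ∪_{Sig1,Sig2} Δ2`: `{Sig1, Sig2}` is a partition of the signature, `{Δ1, Δ2}`
partitions `Δ`, and every conditional of `Δi` uses only atoms from `Σi`. -/
def SyntaxSplitting {V : Type} (Sig1 Sig2 : Set V) (Δ Δ1 Δ2 : Finset (CondRule V)) : Prop :=
  Sig1 ∪ Sig2 = Set.univ ∧ Disjoint Sig1 Sig2 ∧
  Δ = Δ1 ∪ Δ2 ∧ Disjoint Δ1 Δ2 ∧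
  (∀ r ∈ Δ1, condVars r ⊆ Sig1) ∧ (∀ r ∈ Δ2, condVars r ⊆ Sig2)

end SysW

section Aux
open SysW
variable {V : Type}

lemma eval_congr (ω ω' : V → Bool) (φ : PForm V) (h : ∀ v ∈ φ.vars, ω v = ω' v) :
    φ.eval ω = φ.eval ω' := by
  induction φ with
  | var v => exact h v rfl
  | tru => rfl
  | fls => rfl
  | neg φ ih => simp [PForm.eval, ih h]
  | conj φ ψ ih1 ih2 =>
      simp [PForm.eval, ih1 fun v hv => h v (Set.mem_union_left _ hv),
        ih2 fun v hv => h v (Set.mem_union_right _ hv)]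
  | disj φ ψ ih1 ih2 =>
      simp [PForm.eval, ih1 fun v hv => h v (Set.mem_union_left _ hv),
        ih2 fun v hv => h v (Set.mem_union_right _ hv)]

lemma falsifies_congr {ω ω' : V → Bool} {r : CondRule V} (h : ∀ v ∈ condVars r, ω v = ω' v) :
    falsifies ω r ↔ falsifies ω' r := by
  unfold falsifies
  rw [eval_congr ω ω' r.ante fun v hv => h v (Set.mem_union_left _ hv),
    eval_congr ω ω' r.cons fun v hv => h v (Set.mem_union_right _ hv)]

lemma verifies_congr {ω ω' : V → Bool} {r : CondRule V} (h : ∀ v ∈ condVars r, ω v = ω' v) :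
    verifies ω r ↔ verifies ω' r := by
  unfold verifies
  rw [eval_congr ω ω' r.ante fun v hv => h v (Set.mem_union_left _ hv),
    eval_congr ω ω' r.cons fun v hv => h v (Set.mem_union_right _ hv)]

lemma tolerated_anti {S S' : Finset (CondRule V)} (hss : S ⊆ S') {r : CondRule V}
    (h : Tolerated S' r) : Tolerated S r := by
  obtain ⟨ω, hv, hf⟩ := h
  exact ⟨ω, hv, fun r' hr' => hf r' (hss hr')⟩

lemma rest_subset (Δ : Finset (CondRule V)) : ∀ j, rest Δ j ⊆ Δ
  | 0 => Finset.Subset.refl _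
  | j + 1 => (Finset.filter_subset _ _).trans (rest_subset Δ j)

lemma mem_rest_succ {Δ : Finset (CondRule V)} {j : ℕ} {r : CondRule V} :
    r ∈ rest Δ (j + 1) ↔ r ∈ rest Δ j ∧ ¬ Tolerated (rest Δ j) r := by
  simp [rest, Finset.mem_filter]

/-- If `Δ` is consistent, every subset admits a world falsifying none of its members. -/
lemma exists_nofalsify (Δ : Finset (CondRule V)) (hcons : Consistent Δ)
    (S : Finset (CondRule V)) (hS : S ⊆ Δ) :
    ∃ ω : V → Bool, ∀ r' ∈ S, ¬ falsifies ω r' := by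
  by_cases hne : S.Nonempty
  · obtain ⟨n, hn⟩ := hcons
    have hP : ∃ j, ¬ S ⊆ rest Δ j := by
      refine ⟨n, fun hsub => ?_⟩
      obtain ⟨r, hr⟩ := hne
      have := hsub hr
      rw [hn] at this
      exact absurd this (Finset.notMem_empty r)
    have hm0 : Nat.find hP ≠ 0 := by
      intro h0
      have hm := Nat.find_spec hP
      rw [h0] at hm
      exact hm hS
    obtain ⟨j, hj'⟩ := Nat.exists_eq_succ_of_ne_zero hm0
    have hmspec := Nat.find_spec hP
    rw [hj'] at hmspec
    have hj : S ⊆ rest Δ j := by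
      by_contra hc
      exact absurd (Nat.find_min' hP hc) (by omega)
    obtain ⟨r, hrS, hrn⟩ := Finset.not_subset.mp hmspec
    have hrj : r ∈ rest Δ j := hj hrS
    have htol : Tolerated (rest Δ j) r := by
      by_contra hc
      exact hrn (mem_rest_succ.mpr ⟨hrj, hc⟩)
    obtain ⟨ω, _, hf⟩ := tolerated_anti hj htol
    exact ⟨ω, hf⟩
  · exact ⟨fun _ => true, fun r' hr' => absurd ⟨r', hr'⟩ hne⟩

variable {Sig1 Sig2 : Set V} {Δ Δ1 Δ2 : Finset (CondRule V)}

/-- Tolerance transfer: for `r ∈ Δ1`, tolerance by `rest Δ j` and by `rest Δ1 j` agree. -/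
lemma tol_iff (hsplit : SyntaxSplitting Sig1 Sig2 Δ Δ1 Δ2) (hcons : Consistent Δ) (j : ℕ)
    (hrest : rest Δ j = rest Δ1 j ∪ rest Δ2 j) {r : CondRule V} (hr : r ∈ Δ1) :
    Tolerated (rest Δ j) r ↔ Tolerated (rest Δ1 j) r := by
  obtain ⟨hsig, hdsig, hΔ, hdΔ, hvar1, hvar2⟩ := hsplit
  constructor
  · intro h
    refine tolerated_anti ?_ h
    rw [hrest]; exact Finset.subset_union_left
  · rintro ⟨ω1, hver, hfals⟩
    have hΔ2sub : rest Δ2 j ⊆ Δ := (rest_subset Δ2 j).trans (by rw [hΔ]; exact Finset.subset_union_right)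
    obtain ⟨ω2, hω2⟩ := exists_nofalsify Δ hcons (rest Δ2 j) hΔ2sub
    refine ⟨fun v => if v ∈ Sig1 then ω1 v else ω2 v, ?_, ?_⟩
    · rw [verifies_congr (ω' := ω1) fun v hv => by simp [hvar1 r hr hv]]
      exact hver
    · intro r' hr'
      rw [hrest, Finset.mem_union] at hr'
      rcases hr' with hr' | hr'
      · have hv1 : condVars r' ⊆ Sig1 := hvar1 r' (rest_subset Δ1 j hr')
        rw [falsifies_congr (ω' := ω1) fun v hv => by simp [hv1 hv]]
        exact hfals r' hr'
      · have hv2 : condVars r' ⊆ Sig2 := hvar2 r' (rest_subset Δ2 j hr')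
        have : ∀ v ∈ condVars r', (if v ∈ Sig1 then ω1 v else ω2 v) = ω2 v := by
          intro v hv
          have : v ∉ Sig1 := fun h1 => Set.disjoint_left.mp hdsig h1 (hv2 hv)
          simp [this]
        rw [falsifies_congr (ω' := ω2) this]
        exact hω2 r' hr'

lemma splitting_symm (hsplit : SyntaxSplitting Sig1 Sig2 Δ Δ1 Δ2) :
    SyntaxSplitting Sig2 Sig1 Δ Δ2 Δ1 := by
  obtain ⟨hsig, hdsig, hΔ, hdΔ, hvar1, hvar2⟩ := hsplit
  exact ⟨by rw [Set.union_comm]; exact hsig, hdsig.symm, by rw [Finset.union_comm]; exact hΔ,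
    hdΔ.symm, hvar2, hvar1⟩

lemma tol_iff1 (hsplit : SyntaxSplitting Sig1 Sig2 Δ Δ1 Δ2) (hcons : Consistent Δ) (j : ℕ)
    (hrest : rest Δ j = rest Δ1 j ∪ rest Δ2 j) {r : CondRule V} (hr : r ∈ Δ1) :
    Tolerated (rest Δ1 j ∪ rest Δ2 j) r ↔ Tolerated (rest Δ1 j) r := by
  rw [← hrest]; exact tol_iff hsplit hcons j hrest hr

lemma tol_iff2 (hsplit : SyntaxSplitting Sig1 Sig2 Δ Δ1 Δ2) (hcons : Consistent Δ) (j : ℕ)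
    (hrest : rest Δ j = rest Δ1 j ∪ rest Δ2 j) {r : CondRule V} (hr : r ∈ Δ2) :
    Tolerated (rest Δ1 j ∪ rest Δ2 j) r ↔ Tolerated (rest Δ2 j) r := by
  rw [Finset.union_comm, ← show rest Δ j = rest Δ2 j ∪ rest Δ1 j from by
    rw [hrest, Finset.union_comm]]
  exact tol_iff (splitting_symm hsplit) hcons j (by rw [hrest, Finset.union_comm]) hr

lemma rest_part_union (hsplit : SyntaxSplitting Sig1 Sig2 Δ Δ1 Δ2) (hcons : Consistent Δ) :
    ∀ j, rest Δ j = rest Δ1 j ∪ rest Δ2 j ∧ part Δ j = part Δ1 j ∪ part Δ2 j := by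
  intro j
  induction j with
  | zero =>
      refine ⟨hsplit.2.2.1, ?_⟩
      · have h0 : rest Δ 0 = rest Δ1 0 ∪ rest Δ2 0 := hsplit.2.2.1
        ext r
        simp only [part, Finset.mem_filter, Finset.mem_union, h0]
        constructor
        · rintro ⟨hr | hr, htol⟩
          · exact Or.inl ⟨hr, (tol_iff1 hsplit hcons 0 h0 (rest_subset Δ1 0 hr)).mp htol⟩
          · exact Or.inr ⟨hr, (tol_iff2 hsplit hcons 0 h0 (rest_subset Δ2 0 hr)).mp htol⟩
        · rintro (⟨hr, htol⟩ | ⟨hr, htol⟩)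
          · exact ⟨Or.inl hr, (tol_iff1 hsplit hcons 0 h0 (rest_subset Δ1 0 hr)).mpr htol⟩
          · exact ⟨Or.inr hr, (tol_iff2 hsplit hcons 0 h0 (rest_subset Δ2 0 hr)).mpr htol⟩
  | succ j ih =>
      obtain ⟨hrest, _⟩ := ih
      have h1 : rest Δ (j + 1) = rest Δ1 (j + 1) ∪ rest Δ2 (j + 1) := by
        ext r
        simp only [mem_rest_succ, Finset.mem_union]
        constructor
        · rintro ⟨hr, htol⟩
          rw [hrest, Finset.mem_union] at hr
          rcases hr with hr | hr
          · exact Or.inl ⟨hr, fun hc => htol ((tol_iff hsplit hcons j hrest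
              (rest_subset Δ1 j hr)).mpr hc)⟩
          · exact Or.inr ⟨hr, fun hc => htol ((tol_iff (splitting_symm hsplit) hcons j
              (by rw [hrest, Finset.union_comm]) (rest_subset Δ2 j hr)).mpr hc)⟩
        · rintro (⟨hr, htol⟩ | ⟨hr, htol⟩)
          · refine ⟨by rw [hrest]; exact Finset.mem_union_left _ hr, fun hc => htol
              ((tol_iff hsplit hcons j hrest (rest_subset Δ1 j hr)).mp hc)⟩
          · refine ⟨by rw [hrest]; exact Finset.mem_union_right _ hr, fun hc => htol
              ((tol_iff (splitting_symm hsplit) hcons j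
                (by rw [hrest, Finset.union_comm]) (rest_subset Δ2 j hr)).mp hc)⟩
      refine ⟨h1, ?_⟩
      ext r
      simp only [part, Finset.mem_filter, Finset.mem_union, h1]
      constructor
      · rintro ⟨hr | hr, htol⟩
        · exact Or.inl ⟨hr, (tol_iff1 hsplit hcons (j+1) h1 (rest_subset Δ1 _ hr)).mp htol⟩
        · exact Or.inr ⟨hr, (tol_iff2 hsplit hcons (j+1) h1 (rest_subset Δ2 _ hr)).mp htol⟩
      · rintro (⟨hr, htol⟩ | ⟨hr, htol⟩)
        · exact ⟨Or.inl hr, (tol_iff1 hsplit hcons (j+1) h1 (rest_subset Δ1 _ hr)).mpr htol⟩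
        · exact ⟨Or.inr hr, (tol_iff2 hsplit hcons (j+1) h1 (rest_subset Δ2 _ hr)).mpr htol⟩

lemma fpart_subset (Δ : Finset (CondRule V)) (j : ℕ) (ω : V → Bool) :
    fpart Δ j ω ⊆ Δ :=
  (Finset.filter_subset _ _).trans ((Finset.filter_subset _ _).trans (rest_subset Δ j))

end Aux

open SysW in
/-- For a consistent belief base `Δ = Δ1 ∪_{Σ1,Σ2} Δ2` with syntax splitting
and worlds `ω, ω'`, if `ω ≺_Δ ω'` then `ω ≺_{Δ1} ω'` or `ω ≺_{Δ2} ω'`. -/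
theorem stmt3 {V : Type} [Fintype V] (Sig1 Sig2 : Set V) (Δ Δ1 Δ2 : Finset (CondRule V))
    (hsplit : SyntaxSplitting Sig1 Sig2 Δ Δ1 Δ2) (hcons : Consistent Δ)
    (ω ω' : V → Bool) (h : prefRel Δ ω ω') :
    prefRel Δ1 ω ω' ∨ prefRel Δ2 ω ω' := by
  obtain ⟨m, hgt, hm⟩ := h
  have key := rest_part_union hsplit hcons
  have hfp : ∀ i (ω0 : V → Bool), fpart Δ i ω0 = fpart Δ1 i ω0 ∪ fpart Δ2 i ω0 := fun i ω0 => by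
    unfold fpart; rw [(key i).2, Finset.filter_union]
  have hd : ∀ r ∈ Δ1, r ∉ Δ2 := fun r hr => Finset.disjoint_left.mp hsplit.2.2.2.1 hr
  have hsub1 : ∀ (ωa ωb : V → Bool) i, fpart Δ i ωa ⊆ fpart Δ i ωb →
      fpart Δ1 i ωa ⊆ fpart Δ1 i ωb := by
    intro ωa ωb i hsub r hr
    have hrΔ : r ∈ fpart Δ i ωb := hsub (by rw [hfp]; exact Finset.mem_union_left _ hr)
    rw [hfp, Finset.mem_union] at hrΔ
    rcases hrΔ with h' | h'
    · exact h'
    · exact absurd (fpart_subset Δ2 i ωb h') (hd r (fpart_subset Δ1 i ωa hr))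
  have hsub2 : ∀ (ωa ωb : V → Bool) i, fpart Δ i ωa ⊆ fpart Δ i ωb →
      fpart Δ2 i ωa ⊆ fpart Δ2 i ωb := by
    intro ωa ωb i hsub r hr
    have hrΔ : r ∈ fpart Δ i ωb := hsub (by rw [hfp]; exact Finset.mem_union_right _ hr)
    rw [hfp, Finset.mem_union] at hrΔ
    rcases hrΔ with h' | h'
    · exact absurd (fpart_subset Δ2 i ωa hr) (hd r (fpart_subset Δ1 i ωb h'))
    · exact h'
  have heq1 : ∀ i, m < i → fpart Δ1 i ω = fpart Δ1 i ω' := fun i hi =>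
    Finset.Subset.antisymm (hsub1 ω ω' i (le_of_eq (hgt i hi))) (hsub1 ω' ω i (le_of_eq (hgt i hi).symm))
  have heq2 : ∀ i, m < i → fpart Δ2 i ω = fpart Δ2 i ω' := fun i hi =>
    Finset.Subset.antisymm (hsub2 ω ω' i (le_of_eq (hgt i hi))) (hsub2 ω' ω i (le_of_eq (hgt i hi).symm))
  have hf1 : fpart Δ1 m ω ⊆ fpart Δ1 m ω' := hsub1 ω ω' m hm.subset
  have hf2 : fpart Δ2 m ω ⊆ fpart Δ2 m ω' := hsub2 ω ω' m hm.subset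
  by_cases hc : fpart Δ1 m ω = fpart Δ1 m ω'
  · right
    refine ⟨m, heq2, Finset.ssubset_iff_subset_ne.mpr ⟨hf2, ?_⟩⟩
    intro hceq
    exact hm.ne (by rw [hfp, hfp, hc, hceq])
  · left
    exact ⟨m, heq1, Finset.ssubset_iff_subset_ne.mpr ⟨hf1, hc⟩⟩
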